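/- arXiv:2508.06770 — 2 statements merged into one kernel-verified Lean document; each statement's English description precedes it below -/
import Mathlib

section
/- Let λ be a Young diagram with n boxes and diagonal length δ(λ), let σ ∈ S_n, and let α = (α_1, ..., α_N) be any sequence listing the cycle lengths of σ (fixed points included, in any order), so that Σ α_i = n and N = cyc(σ). Then the number of ribbon tableaux of λ of weight α satisfies |RT(λ, α)| ≤ ∏_{i=1}^N (2δ(λ)·α_i), and in particular |RT(λ, α)| ≤ 2^n · δ(λ)^{cyc(σ)}. -/
open scoped BigOperators

namespace ThickHookPaper

/-- The diagonal length `δ(λ)` of a Young diagram: the number of diagonal boxes `(i,i)` in `λ`. -/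
def diagLen (l : YoungDiagram) : ℕ := (l.cells.filter (fun u => u.1 = u.2)).card

/-- The maximal hook length `s(λ) = λ₁ + λ₁' - 1` of a Young diagram. -/
def maxHook (l : YoungDiagram) : ℕ := l.rowLen 0 + l.colLen 0 - 1

/-- The hook length of the box `u = (i, j)` in `λ`. -/
def hook (l : YoungDiagram) (u : ℕ × ℕ) : ℕ :=
  (l.rowLen u.1 - u.2) + (l.colLen u.2 - u.1) - 1

/-- The number of standard tableaux of the skew shape `λ \ μ`, defined as the number of
saturated chains of Young diagrams from `μ` to `λ` (each step adding exactly one box). -/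
noncomputable def skewSYT (μ l : YoungDiagram) : ℕ :=
  Nat.card {f : Fin (l.card - μ.card + 1) → YoungDiagram //
    f 0 = μ ∧ f (Fin.last _) = l ∧
    ∀ i : Fin (l.card - μ.card),
      f i.castSucc ≤ f i.succ ∧ (f i.succ).card = (f i.castSucc).card + 1}

/-- The number of standard Young tableaux of shape `λ`, i.e. the dimension `d_λ`. -/
noncomputable def dim (l : YoungDiagram) : ℕ := skewSYT ⊥ l

/-! ### Ribbons and the Murnaghan--Nakayama character -/

/-- Two boxes are adjacent if they share an edge. -/
def Adj (u v : ℕ × ℕ) : Prop :=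
  (u.1 = v.1 ∧ (u.2 + 1 = v.2 ∨ v.2 + 1 = u.2)) ∨
    (u.2 = v.2 ∧ (u.1 + 1 = v.1 ∨ v.1 + 1 = u.1))

/-- A finite set of boxes is connected if any two of its boxes are linked by a path of
adjacent boxes inside the set. -/
def ConnectedCells (c : Finset (ℕ × ℕ)) : Prop :=
  ∀ u ∈ c, ∀ v ∈ c, Relation.ReflTransGen (fun x y => x ∈ c ∧ y ∈ c ∧ Adj x y) u v

/-- A set of boxes contains no `2 × 2` square. -/
def No2x2 (c : Finset (ℕ × ℕ)) : Prop :=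
  ∀ i j : ℕ, ¬ ((i, j) ∈ c ∧ (i + 1, j) ∈ c ∧ (i, j + 1) ∈ c ∧ (i + 1, j + 1) ∈ c)

/-- `IsRibbon μ l` : the skew diagram `l \ μ` is a ribbon (nonempty, connected, no 2×2 square). -/
def IsRibbon (μ l : YoungDiagram) : Prop :=
  μ ≤ l ∧ (l.cells \ μ.cells).Nonempty ∧ ConnectedCells (l.cells \ μ.cells) ∧
    No2x2 (l.cells \ μ.cells)

/-- The height of a set of boxes: the difference between the largest and smallest
row indices occurring in it. -/
noncomputable def cellsHeight (c : Finset (ℕ × ℕ)) : ℕ :=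
  c.sup Prod.fst - sInf (Prod.fst '' (c : Set (ℕ × ℕ)))

/-- `IsRibbonTableau l α f` : `f` is a ribbon tableau of shape `l` and weight `α`, i.e. a
chain `⊥ = f 0 ⊆ f 1 ⊆ ... ⊆ f N = l` where each successive skew diagram is a ribbon
with `α i` boxes. -/
def IsRibbonTableau (l : YoungDiagram) (α : List ℕ) (f : Fin (α.length + 1) → YoungDiagram) :
    Prop :=
  f 0 = ⊥ ∧ f (Fin.last _) = l ∧
  ∀ i : Fin α.length,
    IsRibbon (f i.castSucc) (f i.succ) ∧
      ((f i.succ).cells \ (f i.castSucc).cells).card = α.get i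

/-- The total height of a ribbon tableau: the sum of the heights of its ribbons. -/
noncomputable def tabHeight (N : ℕ) (f : Fin (N + 1) → YoungDiagram) : ℕ :=
  ∑ i : Fin N, cellsHeight ((f i.succ).cells \ (f i.castSucc).cells)

/-- The Murnaghan--Nakayama alternating sum over ribbon tableaux of shape `l` and weight `α`. -/
noncomputable def charMN (l : YoungDiagram) (α : List ℕ) : ℤ :=
  ∑ᶠ f ∈ {f : Fin (α.length + 1) → YoungDiagram | IsRibbonTableau l α f},
    (-1 : ℤ) ^ tabHeight α.length f

/-- The cycle type of a permutation including fixed points (as parts equal to `1`). -/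
def fullCycleType {n : ℕ} (σ : Equiv.Perm (Fin n)) : Multiset ℕ :=
  σ.cycleType + Multiset.replicate (n - σ.support.card) 1

/-- The character `ch^λ(σ)` of the irreducible representation of `S_n` indexed by `λ ⊢ n`,
defined via the Murnaghan--Nakayama rule. -/
noncomputable def charPerm (l : YoungDiagram) {n : ℕ} (σ : Equiv.Perm (Fin n)) : ℤ :=
  charMN l (fullCycleType σ).toList

/-- The total number of cycles of `σ`, fixed points counted as 1-cycles. -/
def cyc {n : ℕ} (σ : Equiv.Perm (Fin n)) : ℕ := Multiset.card (fullCycleType σ)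

/-- `|σ|`: the minimal number of transpositions whose product is `σ`, which equals
`n` minus the number of cycles of `σ` (fixed points included). -/
def transLen {n : ℕ} (σ : Equiv.Perm (Fin n)) : ℕ := n - cyc σ

/-! ### Excited diagrams -/

/-- The upper-right square of a box. -/
def URS (u : ℕ × ℕ) : Finset (ℕ × ℕ) :=
  {u, (u.1 + 1, u.2), (u.1, u.2 + 1), (u.1 + 1, u.2 + 1)}

/-- One simple excitation step: an excitable box of `E` is moved diagonally up-right. -/
def ExciteStep (l : YoungDiagram) (E E' : Finset (ℕ × ℕ)) : Prop :=
  ∃ u ∈ E, URS u ⊆ l.cells ∧ E ∩ URS u = {u} ∧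
    E' = insert (u.1 + 1, u.2 + 1) (E.erase u)

/-- The set `𝓔(λ, μ)` of excited diagrams of `μ` in `λ`. -/
def Excited (l μ : YoungDiagram) : Set (Finset (ℕ × ℕ)) :=
  {E | Relation.ReflTransGen (ExciteStep l) μ.cells E}

/-- The excited sum `S(λ, μ) = Σ_{E ∈ 𝓔(λ,μ)} Π_{u ∈ E} H(λ, u)`. -/
noncomputable def excitedSum (l μ : YoungDiagram) : ℕ :=
  ∑ᶠ E ∈ Excited l μ, ∏ u ∈ E, hook l u

/-! ### Rectangles, rows -/

/-- The rectangular Young diagram `[a^b]` with `b` rows of length `a`. -/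
def rect (a b : ℕ) : YoungDiagram :=
  ⟨Finset.range b ×ˢ Finset.range a, by
    rintro ⟨i, j⟩ ⟨i', j'⟩ ⟨h1, h2⟩ hu
    simp only [Finset.coe_product, Set.mem_prod, Finset.mem_coe, Finset.mem_range] at *
    exact ⟨lt_of_le_of_lt h1 hu.1, lt_of_le_of_lt h2 hu.2⟩⟩

/-- The one-row Young diagram `[ℓ]`. -/
def rowDiagram (ℓ : ℕ) : YoungDiagram := rect ℓ 1

/-! ### Thick hook decompositions -/

/-- The boxes of `λ` whose diagonal index `min i j` lies in `[lo, hi)`: this is the thick hook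
`λ^{(lo+1) → hi}` in the (1-indexed) notation of the paper. -/
def thickHookCells (l : YoungDiagram) (lo hi : ℕ) : Finset (ℕ × ℕ) :=
  l.cells.filter (fun u => lo ≤ min u.1 u.2 ∧ min u.1 u.2 < hi)

/-- An `(a, b)` thick hook decomposition of `λ`: diagonal indices
`0 = i_0 < i_1 < ... < i_p = δ(λ)` such that each thick hook
`T_j = λ^{(i_{j-1}+1) → i_j}` has between `a` and `b` boxes. -/
structure ThickHookDecomp (l : YoungDiagram) (a b : ℝ) where
  p : ℕ
  p_pos : 0 < p
  idx : ℕ → ℕ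
  idx_zero : idx 0 = 0
  idx_last : idx p = diagLen l
  idx_strictMono : ∀ j < p, idx j < idx (j + 1)
  size_lb : ∀ j < p, a ≤ ((thickHookCells l (idx j) (idx (j + 1))).card : ℝ)
  size_ub : ∀ j < p, ((thickHookCells l (idx j) (idx (j + 1))).card : ℝ) ≤ b

/-- The corners of a Young diagram: boxes `u ∈ λ` such that neither the box to the right
nor the box above (in the French convention: the next box in the row and in the column)
belongs to `λ`. -/
def corners (l : YoungDiagram) : Finset (ℕ × ℕ) :=
  l.cells.filter (fun u => (u.1, u.2 + 1) ∉ l ∧ (u.1 + 1, u.2) ∉ l)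



/-!
A ribbon removable from `ν` has no `2 × 2` square, so it lies on the rim of `ν`: the boxes whose
diagonal successor is not in `ν`. The content `j - i` is injective on the rim, and the contents
of a connected set of boxes form an interval; hence a ribbon with `k` boxes is determined by any
one of its boxes together with the number of its boxes of smaller content, one of `k` values.
Every such ribbon contains a corner of `ν`, and a corner is determined by its diagonal index,
less than `δ(ν)`, and its side of the diagonal. So each step of a ribbon tableau of shape `λ`
has at most `2 δ(λ) α_i` choices. The second bound follows from `2 a ≤ 2 ^ a`, `∑ α_i = n` and
`N = cyc σ`.
-/

open Finset

def content (u : ℕ × ℕ) : ℤ := u.2 - u.1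

def rim (ν : YoungDiagram) : Finset (ℕ × ℕ) := {w ∈ ν.cells | (w.1 + 1, w.2 + 1) ∉ ν}

lemma content_injOn_rim (ν : YoungDiagram) : Set.InjOn content (rim ν) := by
  rintro ⟨a, b⟩ hw ⟨c, d⟩ hw' h
  simp only [rim, coe_filter, YoungDiagram.mem_cells, Set.mem_ofPred_eq, content] at hw hw' h
  rcases lt_trichotomy a c with hac | rfl | hca
  · exact absurd (ν.up_left_mem (by omega) (by omega) hw'.1) hw.2
  · simp only [Prod.mk.injEq, true_and]; omega
  · exact absurd (ν.up_left_mem (by omega) (by omega) hw.1) hw'.2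

lemma sdiff_subset_rim {μ ν : YoungDiagram} (h : No2x2 (ν.cells \ μ.cells)) :
    ν.cells \ μ.cells ⊆ rim ν := by
  rintro ⟨i, j⟩ hw
  simp only [mem_sdiff, YoungDiagram.mem_cells] at hw
  refine mem_filter.mpr ⟨hw.1, fun hsq => h i j ?_⟩
  -- none of the square lies in `μ`, since `(i, j)` does not
  have hin : ∀ a b, a ≤ 1 → b ≤ 1 → (i + a, j + b) ∈ ν.cells \ μ.cells := fun a b ha hb =>
    mem_sdiff.mpr ⟨ν.up_left_mem (by omega) (by omega) hsq,
      fun hμ => hw.2 (μ.up_left_mem (Nat.le_add_right i a) (Nat.le_add_right j b) hμ)⟩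
  exact ⟨hin 0 0 (by omega) (by omega), hin 1 0 le_rfl (by omega), hin 0 1 (by omega) le_rfl,
    hin 1 1 le_rfl le_rfl⟩

lemma ConnectedCells.exists_content_eq {c : Finset (ℕ × ℕ)} (hc : ConnectedCells c)
    {u v : ℕ × ℕ} (hu : u ∈ c) (hv : v ∈ c) {t : ℤ} (hut : content u ≤ t) (htv : t ≤ content v) :
    ∃ w ∈ c, content w = t := by
  induction hc u hu v hv generalizing t with
  | refl => exact ⟨u, hu, le_antisymm hut htv⟩
  | @tail x y _ hxy ih =>
    obtain ⟨hx, hy, hadj⟩ := hxy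
    by_cases htx : t ≤ content x
    · exact ih hx hut htx
    · refine ⟨y, hy, ?_⟩
      rcases hadj with ⟨h1, h2 | h2⟩ | ⟨h1, h2 | h2⟩ <;> simp only [content] at htx htv ⊢ <;> omega

lemma ConnectedCells.ordConnected_image_content {c : Finset (ℕ × ℕ)} (hc : ConnectedCells c) :
    (↑(c.image content) : Set ℤ).OrdConnected := by
  refine ⟨?_⟩
  rintro _ hx _ hy t ⟨hxt, hty⟩
  simp only [coe_image, Set.mem_image, mem_coe] at hx hy ⊢
  obtain ⟨u, hu, rfl⟩ := hx
  obtain ⟨v, hv, rfl⟩ := hy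
  exact hc.exists_content_eq hu hv hxt hty

lemma Int.finset_eq_Icc_of_ordConnected {S : Finset ℤ} (hS : (S : Set ℤ).OrdConnected)
    {c : ℤ} (hc : c ∈ S) :
    S = Icc (c - #{t ∈ S | t < c}) (c - #{t ∈ S | t < c} + #S - 1) := by
  have hne : S.Nonempty := ⟨c, hc⟩
  obtain ⟨m, M, rfl⟩ : ∃ m M, S = Icc m M :=
    ⟨S.min' hne, S.max' hne, ext fun t => ⟨fun ht => mem_Icc.mpr ⟨min'_le S t ht, le_max' S t ht⟩,
      fun ht => hS.out (min'_mem S hne) (max'_mem S hne) (by simpa using ht)⟩⟩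
  rw [mem_Icc] at hc
  have hlt : {t ∈ Icc m M | t < c} = Ico m c := by
    ext t; simp only [mem_filter, mem_Icc, mem_Ico]; omega
  rw [hlt, Int.card_Ico, Int.card_Icc]
  congr 1 <;> omega

lemma eq_filter_rim_of_subset {ν : YoungDiagram} {R : Finset (ℕ × ℕ)} (hR : R ⊆ rim ν) :
    R = {w ∈ rim ν | content w ∈ R.image content} := by
  ext w
  refine ⟨fun hw => mem_filter.mpr ⟨hR hw, mem_image_of_mem _ hw⟩, fun hw => ?_⟩
  obtain ⟨hw, w', hw', hc⟩ := mem_filter.mp hw |>.imp_right mem_image.mp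
  rwa [← content_injOn_rim ν (hR hw') hw hc]

lemma eq_of_subset_rim {ν : YoungDiagram} {R R' : Finset (ℕ × ℕ)} (hR : R ⊆ rim ν)
    (hR' : R' ⊆ rim ν) (hc : ConnectedCells R) (hc' : ConnectedCells R') {u : ℕ × ℕ}
    (hu : u ∈ R) (hu' : u ∈ R') (hcard : #R = #R')
    (hlt : #{w ∈ R | content w < content u} = #{w ∈ R' | content w < content u}) : R = R' := by
  have card_image {R : Finset (ℕ × ℕ)} (hR : R ⊆ rim ν) : #(R.image content) = #R :=
    card_image_of_injOn ((content_injOn_rim ν).mono hR)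
  have card_lt {R : Finset (ℕ × ℕ)} (hR : R ⊆ rim ν) :
      #{t ∈ R.image content | t < content u} = #{w ∈ R | content w < content u} := by
    rw [filter_image,
      card_image_of_injOn ((content_injOn_rim ν).mono ((filter_subset _ _).trans hR))]
  have himage : R.image content = R'.image content := by
    rw [Int.finset_eq_Icc_of_ordConnected hc.ordConnected_image_content (mem_image_of_mem _ hu),
      Int.finset_eq_Icc_of_ordConnected hc'.ordConnected_image_content (mem_image_of_mem _ hu'),
      card_image hR, card_image hR', card_lt hR, card_lt hR', hcard, hlt]
  rw [eq_filter_rim_of_subset hR, eq_filter_rim_of_subset hR', himage]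

lemma eq_of_cells_sdiff_eq {μ μ' ν : YoungDiagram} (h : μ ≤ ν) (h' : μ' ≤ ν)
    (hd : ν.cells \ μ.cells = ν.cells \ μ'.cells) : μ = μ' :=
  YoungDiagram.ext <| by
    rw [← Finset.sdiff_sdiff_eq_self (YoungDiagram.cells_subset_iff.mpr h), hd,
      Finset.sdiff_sdiff_eq_self (YoungDiagram.cells_subset_iff.mpr h')]

lemma exists_mem_corners_of_nonempty {μ ν : YoungDiagram} (h : (ν.cells \ μ.cells).Nonempty) :
    ∃ u ∈ ν.cells \ μ.cells, u ∈ corners ν := by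
  -- a box of the skew shape with maximal `i + j` has no neighbour to its right or below in `ν`
  obtain ⟨⟨i, j⟩, hu, hmax⟩ := exists_max_image _ (fun w : ℕ × ℕ => w.1 + w.2) h
  have hu' := mem_sdiff.mp hu
  have not_mem {a b : ℕ} (ha : i ≤ a) (hb : j ≤ b) (hab : i + j < a + b) : (a, b) ∉ ν :=
    fun hν => absurd (hmax (a, b) (mem_sdiff.mpr ⟨hν, fun hμ => hu'.2 (μ.up_left_mem ha hb hμ)⟩))
      (by simpa using hab)
  exact ⟨(i, j), hu, mem_filter.mpr ⟨hu'.1, not_mem le_rfl (by omega) (by omega),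
    not_mem (by omega) le_rfl (by omega)⟩⟩

lemma eq_of_mem_corners {ν : YoungDiagram} {u v : ℕ × ℕ} (hu : u ∈ corners ν)
    (hv : v ∈ corners ν) (hmin : min u.1 u.2 = min v.1 v.2) (hside : u.1 ≤ u.2 ↔ v.1 ≤ v.2) :
    u = v := by
  obtain ⟨a, b⟩ := u
  obtain ⟨c, d⟩ := v
  simp only [corners, mem_filter, YoungDiagram.mem_cells] at hu hv hmin hside
  by_cases hab : a ≤ b
  · obtain rfl : a = c := by omega
    rcases lt_trichotomy b d with h | rfl | h
    · exact absurd (ν.up_left_mem le_rfl h hv.1) hu.2.1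
    · rfl
    · exact absurd (ν.up_left_mem le_rfl h hu.1) hv.2.1
  · obtain rfl : b = d := by omega
    rcases lt_trichotomy a c with h | rfl | h
    · exact absurd (ν.up_left_mem h le_rfl hv.1) hu.2.2
    · rfl
    · exact absurd (ν.up_left_mem h le_rfl hu.1) hv.2.2

lemma min_lt_diagLen {l : YoungDiagram} {u : ℕ × ℕ} (hu : u ∈ l) : min u.1 u.2 < diagLen l := by
  have hdiag : (range (min u.1 u.2 + 1)).map ⟨fun t => (t, t), fun _ _ h => congrArg Prod.fst h⟩ ⊆
      {w ∈ l.cells | w.1 = w.2} := by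
    intro w hw
    obtain ⟨t, ht, rfl⟩ := mem_map.mp hw
    rw [mem_range] at ht
    exact mem_filter.mpr ⟨l.up_left_mem (by omega) (by omega) hu, rfl⟩
  simpa [diagLen] using card_le_card hdiag

noncomputable def ribbonCorner (ν μ : YoungDiagram) : ℕ × ℕ :=
  Classical.epsilon fun u => u ∈ ν.cells \ μ.cells ∧ u ∈ corners ν

noncomputable def ribbonCode (ν μ : YoungDiagram) : ℕ × Bool × ℕ :=
  let u := ribbonCorner ν μ
  (min u.1 u.2, decide (u.1 ≤ u.2), #{w ∈ ν.cells \ μ.cells | content w < content u})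

lemma ribbonCorner_spec {μ ν : YoungDiagram} (h : (ν.cells \ μ.cells).Nonempty) :
    ribbonCorner ν μ ∈ ν.cells \ μ.cells ∧ ribbonCorner ν μ ∈ corners ν :=
  Classical.epsilon_spec (exists_mem_corners_of_nonempty h)

lemma ribbonCode_fst_lt {l μ ν : YoungDiagram} (h : (ν.cells \ μ.cells).Nonempty) (hν : ν ≤ l) :
    (ribbonCode ν μ).1 < diagLen l :=
  min_lt_diagLen (hν (mem_filter.mp (ribbonCorner_spec h).2).1)

lemma ribbonCode_snd_snd_lt {μ ν : YoungDiagram} (h : (ν.cells \ μ.cells).Nonempty) :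
    (ribbonCode ν μ).2.2 < #(ν.cells \ μ.cells) :=
  card_lt_card (filter_ssubset.mpr ⟨_, (ribbonCorner_spec h).1, lt_irrefl _⟩)

lemma IsRibbon.eq_of_ribbonCode_eq {μ μ' ν : YoungDiagram} (h : IsRibbon μ ν) (h' : IsRibbon μ' ν)
    (hcard : #(ν.cells \ μ.cells) = #(ν.cells \ μ'.cells))
    (hcode : ribbonCode ν μ = ribbonCode ν μ') : μ = μ' := by
  obtain ⟨hle, hne, hconn, hsq⟩ := h
  obtain ⟨hle', hne', hconn', hsq'⟩ := h'
  obtain ⟨hu, hcorner⟩ := ribbonCorner_spec hne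
  obtain ⟨hu', hcorner'⟩ := ribbonCorner_spec hne'
  simp only [ribbonCode, Prod.mk.injEq, decide_eq_decide] at hcode
  rw [← eq_of_mem_corners hcorner hcorner' hcode.1 hcode.2.1] at hu' hcode
  exact eq_of_cells_sdiff_eq hle hle' <| eq_of_subset_rim (sdiff_subset_rim hsq)
    (sdiff_subset_rim hsq') hconn hconn' hu hu' hcard hcode.2.2

namespace IsRibbonTableau

variable {l : YoungDiagram} {α : List ℕ} {f g : Fin (α.length + 1) → YoungDiagram}

lemma le (hf : IsRibbonTableau l α f) (j : Fin (α.length + 1)) : f j ≤ l := by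
  induction j using Fin.reverseInduction with
  | last => exact hf.2.1.le
  | cast i ih => exact (hf.2.2 i).1.1.trans ih

lemma eq_of_ribbonCode_eq (hf : IsRibbonTableau l α f) (hg : IsRibbonTableau l α g)
    (hcode : ∀ i : Fin α.length,
      ribbonCode (f i.succ) (f i.castSucc) = ribbonCode (g i.succ) (g i.castSucc)) : f = g := by
  funext j
  induction j using Fin.reverseInduction with
  | last => rw [hf.2.1, hg.2.1]
  | cast i ih =>
    obtain ⟨hfi, hfcard⟩ := hf.2.2 i
    obtain ⟨hgi, hgcard⟩ := hg.2.2 i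
    have hcodei := hcode i
    rw [ih] at hfi hfcard hcodei
    exact hfi.eq_of_ribbonCode_eq hgi (hfcard.trans hgcard.symm) hcodei

end IsRibbonTableau

theorem card_ribbonTableau_le_prod (l : YoungDiagram) (α : List ℕ) :
    Nat.card {f : Fin (α.length + 1) → YoungDiagram // IsRibbonTableau l α f} ≤
      ∏ i : Fin α.length, 2 * diagLen l * α.get i := by
  let code (f : {f // IsRibbonTableau l α f}) (i : Fin α.length) :
      Fin (diagLen l) × Bool × Fin (α.get i) :=
    have hi := f.2.2.2 i
    let c := ribbonCode (f.1 i.succ) (f.1 i.castSucc)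
    (⟨c.1, ribbonCode_fst_lt hi.1.2.1 (f.2.le _)⟩, c.2.1,
      ⟨c.2.2, hi.2 ▸ ribbonCode_snd_snd_lt hi.1.2.1⟩)
  have hcode : Function.Injective code := by
    intro f g hfg
    refine Subtype.ext (f.2.eq_of_ribbonCode_eq g.2 fun i => ?_)
    have hi := congrFun hfg i
    simp only [code, Prod.mk.injEq, Fin.mk.injEq] at hi
    exact Prod.ext hi.1 (Prod.ext hi.2.1 hi.2.2)
  calc Nat.card {f // IsRibbonTableau l α f}
      ≤ Nat.card (∀ i : Fin α.length, Fin (diagLen l) × Bool × Fin (α.get i)) :=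
        Nat.card_le_card_of_injective code hcode
    _ = ∏ i : Fin α.length, 2 * diagLen l * α.get i := by
        simp only [Nat.card_eq_fintype_card, Fintype.card_pi, Fintype.card_prod, Fintype.card_fin,
          Fintype.card_bool]
        exact prod_congr rfl fun i _ => by ring

lemma two_mul_le_two_pow (a : ℕ) : 2 * a ≤ 2 ^ a := by
  cases a with
  | zero => simp
  | succ a => rw [pow_succ]; have := @Nat.lt_two_pow_self a; omega

lemma prod_two_mul_mul_get_le (d : ℕ) (α : List ℕ) :
    ∏ i : Fin α.length, 2 * d * α.get i ≤ 2 ^ α.sum * d ^ α.length := by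
  rw [show ∏ i : Fin α.length, 2 * d * α.get i = (α.map (2 * d * ·)).prod by
    simp [Fin.prod_univ_fun_getElem]]
  induction α with
  | nil => simp
  | cons a α ih =>
    simp only [List.map_cons, List.prod_cons, List.sum_cons, List.length_cons, pow_add, pow_succ]
    calc 2 * d * a * (α.map (2 * d * ·)).prod
        = 2 * a * d * (α.map (2 * d * ·)).prod := by ring
      _ ≤ 2 ^ a * d * (2 ^ α.sum * d ^ α.length) := by gcongr; exact two_mul_le_two_pow a
      _ = 2 ^ a * 2 ^ α.sum * (d ^ α.length * d) := by ring

lemma sum_fullCycleType {n : ℕ} (σ : Equiv.Perm (Fin n)) : (fullCycleType σ).sum = n := by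
  have hsupp : #σ.support ≤ n := by simpa using card_le_univ σ.support
  rw [fullCycleType, Multiset.sum_add, Equiv.Perm.sum_cycleType, Multiset.sum_replicate,
    smul_eq_mul, mul_one]
  omega

theorem count_ribbon_tableaux_general (n : ℕ) (l : YoungDiagram)
    (σ : Equiv.Perm (Fin n)) (α : List ℕ) (hα : (α : Multiset ℕ) = fullCycleType σ) :
    Nat.card {f : Fin (α.length + 1) → YoungDiagram // IsRibbonTableau l α f} ≤
        ∏ i : Fin α.length, 2 * diagLen l * α.get i ∧
      Nat.card {f : Fin (α.length + 1) → YoungDiagram // IsRibbonTableau l α f} ≤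
        2 ^ n * diagLen l ^ cyc σ := by
  have hsum : α.sum = n := by rw [← Multiset.sum_coe, hα, sum_fullCycleType]
  have hlen : α.length = cyc σ := by rw [cyc, ← hα, Multiset.coe_card]
  refine ⟨card_ribbonTableau_le_prod l α, (card_ribbonTableau_le_prod l α).trans ?_⟩
  simpa only [hsum, hlen] using prod_two_mul_mul_get_le (diagLen l) α

/-- bound on the number of ribbon tableaux of `λ` of weight `α`, where `α`
lists the cycle lengths of `σ` (fixed points included, in any order). -/
theorem count_ribbon_tableaux (n : ℕ) (l : YoungDiagram) (hl : l.card = n)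
    (σ : Equiv.Perm (Fin n)) (α : List ℕ) (hα : (α : Multiset ℕ) = fullCycleType σ) :
    Nat.card {f : Fin (α.length + 1) → YoungDiagram // IsRibbonTableau l α f} ≤
        ∏ i : Fin α.length, 2 * diagLen l * α.get i ∧
      Nat.card {f : Fin (α.length + 1) → YoungDiagram // IsRibbonTableau l α f} ≤
        2 ^ n * diagLen l ^ cyc σ :=
  count_ribbon_tableaux_general n l σ α hα

end ThickHookPaper
end

section
/- Let C > 0. For all integers 1 ≤ k ≤ n, every partition λ ⊢ n, and every C-balanced partition μ ⊢ k with μ ⊆ λ, the quantity A_{λ,μ} := k! · d_{λ\μ}/(d_μ · d_λ) satisfies A_{λ,μ} ≤ (C²e)^k. -/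
open scoped BigOperators

namespace ThickHookPaper

/-! Concatenating saturated chains gives `d_μ · d_{λ\μ} ≤ d_λ`, so `A_{λ,μ} ≤ k! / d_μ²`.
Cutting `μ` along its antidiagonals `i + j = d` (all `d < s(μ)`) gives a chain of diagrams whose
successive differences are antichains, each of which can be filled in any order; hence
`d_μ ≥ ∏_d n_d!`, where `n_d` counts the cells with `i + j = d`. The multinomial coefficient
`k! / ∏_d n_d!` is at most `s(μ)^k`, so `k! ≤ s(μ)^k d_μ` and
`A_{λ,μ} ≤ s(μ)^{2k} / k! ≤ (C²k)^k / k! ≤ (C²e)^k`. -/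

open Finset
open scoped Nat

def addsBox : SetRel YoungDiagram YoungDiagram := {p | p.1 ≤ p.2 ∧ p.2.card = p.1.card + 1}

def SkewChain (ν μ : YoungDiagram) : Type := {p : RelSeries addsBox // p.head = ν ∧ p.last = μ}

section RelSeries

variable {α : Type*} {r : SetRel α α}

theorem _root_.RelSeries.toList_smash (p q : RelSeries r) (h : p.last = q.head) :
    (p.smash q h).toList = List.ofFn (fun i : Fin p.length => p i.castSucc) ++ q.toList :=
  List.ofFn_fin_append (fun i : Fin p.length => p i.castSucc) q

theorem _root_.RelSeries.eq_of_smash_eq {p p' q q' : RelSeries r} (h : p.last = q.head)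
    (h' : p'.last = q'.head) (hlen : p.length = p'.length)
    (heq : p.smash q h = p'.smash q' h') : p = p' ∧ q = q' := by
  have hlists := congrArg RelSeries.toList heq
  rw [RelSeries.toList_smash, RelSeries.toList_smash] at hlists
  obtain ⟨hinit, hq⟩ := List.append_inj hlists (by simpa using hlen)
  have hq : q = q' := RelSeries.toList_injective hq
  refine ⟨RelSeries.toList_injective ?_, hq⟩
  rw [RelSeries.toList, RelSeries.toList, List.ofFn_succ', List.ofFn_succ']
  exact congrArg₂ List.concat hinit
    (by rw [RelSeries.apply_last, RelSeries.apply_last, h, h', hq])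

end RelSeries

namespace addsBox

theorem card_apply (p : RelSeries addsBox) (i : Fin (p.length + 1)) :
    (p i).card = p.head.card + i := by
  induction i using Fin.induction with
  | zero => rfl
  | succ i ih => rw [(p.step i).2, ih, Fin.val_succ, Fin.val_castSucc, add_assoc]

theorem length_eq (p : RelSeries addsBox) : p.length = p.last.card - p.head.card := by
  rw [← RelSeries.apply_last, card_apply, Fin.val_last]; omega

end addsBox

instance (μ : YoungDiagram) : Finite {ν // ν ≤ μ} :=
  Finite.of_injective (fun ν : {ν // ν ≤ μ} => (⟨ν.1.cells, Finset.mem_powerset.2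
    (YoungDiagram.cells_subset_iff.2 ν.2)⟩ : μ.cells.powerset))
    (fun _ _ h => Subtype.ext (YoungDiagram.ext (congrArg Subtype.val h)))

noncomputable def skewChainEquiv (ν μ : YoungDiagram) :
    {f : Fin (μ.card - ν.card + 1) → YoungDiagram //
      f 0 = ν ∧ f (Fin.last _) = μ ∧ ∀ i : Fin (μ.card - ν.card),
        f i.castSucc ≤ f i.succ ∧ (f i.succ).card = (f i.castSucc).card + 1} ≃ SkewChain ν μ :=
  Equiv.ofBijective (fun f => ⟨⟨_, f.1, f.2.2.2⟩, f.2.1, f.2.2.1⟩) <| by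
    refine ⟨fun f g h => ?_, fun ⟨⟨N, f, hf⟩, h0, hN⟩ => ?_⟩
    · exact Subtype.ext (eq_of_heq (RelSeries.mk.inj (congrArg Subtype.val h)).2)
    · have hlen := addsBox.length_eq ⟨N, f, hf⟩
      rw [h0, hN] at hlen
      subst hlen
      exact ⟨⟨f, h0, hN, hf⟩, rfl⟩

theorem skewSYT_eq_card_skewChain (ν μ : YoungDiagram) :
    skewSYT ν μ = Nat.card (SkewChain ν μ) :=
  Nat.card_congr (skewChainEquiv ν μ)

instance (ν μ : YoungDiagram) : Finite (SkewChain ν μ) := by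
  refine @Finite.of_equiv _ _ ?_ (skewChainEquiv ν μ)
  exact Finite.of_injective (fun f i => (⟨f.1 i, (Fin.monotone_iff_le_succ.2
    (fun i => (f.2.2.2 i).1) (Fin.le_last i)).trans_eq f.2.2.1⟩ : {ν' // ν' ≤ μ}))
    fun f g h => Subtype.ext (funext fun i => congrArg Subtype.val (congrFun h i))

theorem skewSYT_mul_skewSYT_le (ν ρ μ : YoungDiagram) :
    skewSYT ν ρ * skewSYT ρ μ ≤ skewSYT ν μ := by
  simp only [skewSYT_eq_card_skewChain, ← Nat.card_prod]
  refine Nat.card_le_card_of_injective (fun pq : SkewChain ν ρ × SkewChain ρ μ =>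
    ⟨pq.1.1.smash pq.2.1 (pq.1.2.2.trans pq.2.2.1.symm), by simp [pq.1.2.1],
      by simp [pq.2.2.2]⟩)
    fun ⟨p, q⟩ ⟨p', q'⟩ h => ?_
  have hlen : p.1.length = p'.1.length := by
    rw [addsBox.length_eq, addsBox.length_eq, p.2.1, p.2.2, p'.2.1, p'.2.2]
  obtain ⟨hp, hq⟩ := RelSeries.eq_of_smash_eq (p.2.2.trans q.2.1.symm)
    (p'.2.2.trans q'.2.1.symm) hlen (congrArg Subtype.val h)
  exact Prod.ext (Subtype.ext hp) (Subtype.ext hq)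

section Antichain

variable {ρ μ : YoungDiagram} {m : ℕ} (e : Fin m ≃ ↥(μ.cells \ ρ.cells))

def fillCells (t : ℕ) : Finset (ℕ × ℕ) :=
  ρ.cells ∪ ({i | (i : ℕ) < t} : Finset (Fin m)).image fun i => (e i : ℕ × ℕ)

theorem mem_fillCells {t : ℕ} {x : ℕ × ℕ} :
    x ∈ fillCells e t ↔ x ∈ ρ.cells ∨ ∃ i : Fin m, (i : ℕ) < t ∧ (e i : ℕ × ℕ) = x := by
  simp [fillCells]

theorem fillCells_zero : fillCells e 0 = ρ.cells := by
  simp [fillCells]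

theorem fillCells_length (h : ρ ≤ μ) : fillCells e m = μ.cells := by
  ext x
  simp only [mem_fillCells, Fin.is_lt, true_and]
  refine ⟨?_, fun hx => ?_⟩
  · rintro (hx | ⟨i, rfl⟩)
    · exact YoungDiagram.cells_subset_iff.2 h hx
    · exact (Finset.mem_sdiff.1 (e i).2).1
  · by_cases hρ : x ∈ ρ.cells
    · exact Or.inl hρ
    · exact Or.inr ⟨e.symm ⟨x, Finset.mem_sdiff.2 ⟨hx, hρ⟩⟩, by simp⟩

theorem fillCells_succ (t : Fin m) :
    fillCells e (t + 1) = insert (e t : ℕ × ℕ) (fillCells e t) := by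
  ext x
  simp only [mem_fillCells, Finset.mem_insert, Nat.lt_succ_iff_lt_or_eq, Fin.val_inj]
  grind

theorem coe_notMem_fillCells (t : Fin m) : (e t : ℕ × ℕ) ∉ fillCells e t := by
  rw [mem_fillCells]
  rintro (hρ | ⟨i, hi, hit⟩)
  · exact (Finset.mem_sdiff.1 (e t).2).2 hρ
  · exact hi.ne (congrArg Fin.val (e.injective (Subtype.ext hit)))

theorem isLowerSet_fillCells (hanti : IsAntichain (· ≤ ·) (↑(μ.cells \ ρ.cells) : Set (ℕ × ℕ)))
    (t : ℕ) : IsLowerSet (fillCells e t : Set (ℕ × ℕ)) := by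
  intro x y hyx hx
  simp only [Finset.mem_coe, mem_fillCells] at hx ⊢
  rcases hx with hx | ⟨i, hi, rfl⟩
  · exact Or.inl (ρ.isLowerSet hyx hx)
  · by_cases hy : y ∈ ρ.cells
    · exact Or.inl hy
    have hei := (e i).2
    have hy' : y ∈ μ.cells \ ρ.cells := Finset.mem_sdiff.2
      ⟨μ.isLowerSet hyx (Finset.mem_sdiff.1 hei).1, hy⟩
    exact Or.inr ⟨i, hi, (hanti.eq hy' hei hyx).symm⟩

def fillChain (h : ρ ≤ μ) (hanti : IsAntichain (· ≤ ·) (↑(μ.cells \ ρ.cells) : Set (ℕ × ℕ)))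
    (e : Fin m ≃ ↥(μ.cells \ ρ.cells)) : SkewChain ρ μ :=
  ⟨{ length := m
     toFun := fun t => ⟨fillCells e t, isLowerSet_fillCells e hanti t⟩
     step := fun t => by
       change fillCells e t ⊆ fillCells e (t + 1) ∧
         #(fillCells e (t + 1)) = #(fillCells e t) + 1
       rw [fillCells_succ, card_insert_of_notMem (coe_notMem_fillCells e t)]
       exact ⟨subset_insert _ _, rfl⟩ },
    YoungDiagram.ext (fillCells_zero e), YoungDiagram.ext (fillCells_length e h)⟩

theorem fillChain_injective (h : ρ ≤ μ)
    (hanti : IsAntichain (· ≤ ·) (↑(μ.cells \ ρ.cells) : Set (ℕ × ℕ))) :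
    Function.Injective (fillChain (m := m) h hanti) := by
  intro e e' hee'
  have hfill (t : ℕ) (ht : t < m + 1) : fillCells e t = fillCells e' t :=
    congrArg YoungDiagram.cells
      (congrFun (eq_of_heq (RelSeries.mk.inj (congrArg Subtype.val hee')).2) ⟨t, ht⟩)
  refine Equiv.ext fun t => Subtype.ext ?_
  have hmem : (e t : ℕ × ℕ) ∈ insert (e' t : ℕ × ℕ) (fillCells e' t) := by
    rw [← fillCells_succ, ← hfill (t + 1) (by omega), fillCells_succ]
    exact mem_insert_self _ _
  rcases mem_insert.1 hmem with heq | hold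
  · exact heq
  · rw [← hfill t (by omega)] at hold
    exact absurd hold (coe_notMem_fillCells e t)

end Antichain

theorem factorial_le_skewSYT_of_isAntichain {ρ μ : YoungDiagram} (h : ρ ≤ μ)
    (hanti : IsAntichain (· ≤ ·) (↑(μ.cells \ ρ.cells) : Set (ℕ × ℕ))) :
    (μ.card - ρ.card)! ≤ skewSYT ρ μ := by
  have hcard : Fintype.card ↥(μ.cells \ ρ.cells) = μ.card - ρ.card := by
    rw [Fintype.card_coe, card_sdiff_of_subset (YoungDiagram.cells_subset_iff.2 h)]
  rw [skewSYT_eq_card_skewChain, ← hcard, ← Fintype.card_fin (Fintype.card _),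
    ← Fintype.card_equiv (Fintype.equivFin _).symm, ← Nat.card_eq_fintype_card]
  exact Nat.card_le_card_of_injective _ (fillChain_injective h hanti)

theorem _root_.Nat.multinomial_le_card_pow {α : Type*} (s : Finset α) (f : α → ℕ) :
    Nat.multinomial s f ≤ #s ^ ∑ i ∈ s, f i := by
  classical
  set g : α → ℕ := fun i => if i ∈ s then f i else 0
  have hfg : ∀ i ∈ s, f i = g i := fun i hi => by simp [g, hi]
  rw [Nat.multinomial_congr hfg, sum_congr rfl hfg]
  have hpow := sum_pow_eq_sum_piAntidiag s (fun _ => (1 : ℕ)) (∑ i ∈ s, g i)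
  simp only [sum_const, smul_eq_mul, mul_one, one_pow, prod_const_one] at hpow
  rw [hpow]
  refine single_le_sum (f := fun k => Nat.multinomial s k) (fun _ _ => Nat.zero_le _) ?_
  refine mem_piAntidiag.2 ⟨rfl, fun i hi => ?_⟩
  by_contra hs
  exact hi (by simp [g, hs])

theorem add_lt_maxHook {μ : YoungDiagram} {u : ℕ × ℕ} (hu : u ∈ μ) : u.1 + u.2 < maxHook μ := by
  have hrow : u.2 < μ.rowLen 0 :=
    (YoungDiagram.mem_iff_lt_rowLen.1 hu).trans_le (μ.rowLen_anti 0 u.1 (Nat.zero_le _))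
  have hcol : u.1 < μ.colLen 0 :=
    (YoungDiagram.mem_iff_lt_colLen.1 hu).trans_le (μ.colLen_anti 0 u.2 (Nat.zero_le _))
  unfold maxHook
  omega

def antidiagBelow (μ : YoungDiagram) (d : ℕ) : YoungDiagram :=
  ⟨{u ∈ μ.cells | u.1 + u.2 < d}, fun x y hyx hx => by
    simp only [coe_filter, Set.mem_ofPred_eq] at hx ⊢
    exact ⟨μ.isLowerSet hyx hx.1, (add_le_add hyx.1 hyx.2).trans_lt hx.2⟩⟩

theorem antidiagBelow_zero (μ : YoungDiagram) : antidiagBelow μ 0 = ⊥ :=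
  YoungDiagram.ext (by simp [antidiagBelow])

theorem antidiagBelow_maxHook (μ : YoungDiagram) : antidiagBelow μ (maxHook μ) = μ :=
  YoungDiagram.ext (filter_true_of_mem fun _ hu => add_lt_maxHook ((μ.mem_cells _).1 hu))

theorem antidiagBelow_mono (μ : YoungDiagram) (d : ℕ) :
    antidiagBelow μ d ≤ antidiagBelow μ (d + 1) :=
  YoungDiagram.cells_subset_iff.1 (monotone_filter_right _ fun _ h => by omega)

theorem cells_antidiagBelow_succ_sdiff (μ : YoungDiagram) (d : ℕ) :
    (antidiagBelow μ (d + 1)).cells \ (antidiagBelow μ d).cells =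
      {u ∈ μ.cells | u.1 + u.2 = d} := by
  ext u
  simp only [antidiagBelow, mem_sdiff, mem_filter]
  by_cases hu : u ∈ μ.cells <;> simp only [hu, true_and, false_and, not_false_eq_true, and_true]
  omega

theorem isAntichain_antidiagBelow_succ_sdiff (μ : YoungDiagram) (d : ℕ) :
    IsAntichain (· ≤ ·)
      (↑((antidiagBelow μ (d + 1)).cells \ (antidiagBelow μ d).cells) : Set (ℕ × ℕ)) := by
  rw [cells_antidiagBelow_succ_sdiff]
  intro x hx y hy hne hxy
  simp only [coe_filter, Set.mem_ofPred_eq] at hx hy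
  obtain ⟨h1, h2⟩ := Prod.le_def.1 hxy
  exact hne (Prod.ext (by omega) (by omega))

theorem prod_factorial_card_antidiag_le_dim (μ : YoungDiagram) (D : ℕ) :
    ∏ d ∈ range D, (#{u ∈ μ.cells | u.1 + u.2 = d})! ≤ dim (antidiagBelow μ D) := by
  induction D with
  | zero =>
    rw [prod_range_zero, antidiagBelow_zero]
    simpa [dim] using factorial_le_skewSYT_of_isAntichain (le_refl (⊥ : YoungDiagram)) (by simp)
  | succ D ih =>
    have hstep : (#{u ∈ μ.cells | u.1 + u.2 = D})! ≤
        skewSYT (antidiagBelow μ D) (antidiagBelow μ (D + 1)) := by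
      rw [← cells_antidiagBelow_succ_sdiff,
        card_sdiff_of_subset (YoungDiagram.cells_subset_iff.2 (antidiagBelow_mono μ D))]
      exact factorial_le_skewSYT_of_isAntichain (antidiagBelow_mono μ D)
        (isAntichain_antidiagBelow_succ_sdiff μ D)
    rw [prod_range_succ]
    exact (Nat.mul_le_mul ih hstep).trans (skewSYT_mul_skewSYT_le _ _ _)

theorem factorial_card_le_maxHook_pow_mul_dim (μ : YoungDiagram) :
    μ.card ! ≤ maxHook μ ^ μ.card * dim μ := by
  set n : ℕ → ℕ := fun d => #{u ∈ μ.cells | u.1 + u.2 = d}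
  have hsum : ∑ d ∈ range (maxHook μ), n d = μ.card := (card_eq_sum_card_fiberwise
    fun u hu => mem_range.2 (add_lt_maxHook ((μ.mem_cells u).1 hu))).symm
  have hdim := prod_factorial_card_antidiag_le_dim μ (maxHook μ)
  rw [antidiagBelow_maxHook] at hdim
  have hmult := Nat.multinomial_le_card_pow (range (maxHook μ)) n
  rw [card_range, hsum] at hmult
  calc μ.card ! = (∏ d ∈ range (maxHook μ), (n d)!) * Nat.multinomial (range (maxHook μ)) n := by
        rw [Nat.multinomial_spec, hsum]
    _ ≤ dim μ * maxHook μ ^ μ.card := Nat.mul_le_mul hdim hmult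
    _ = maxHook μ ^ μ.card * dim μ := mul_comm _ _

theorem factorial_mul_skewSYT_div_le (μ l : YoungDiagram) :
    (μ.card ! : ℝ) * skewSYT μ l / (dim μ * dim l) ≤
      ((maxHook μ : ℝ) ^ 2) ^ μ.card / μ.card ! := by
  have hdim : (dim μ : ℝ) * skewSYT μ l ≤ dim l := by
    exact_mod_cast skewSYT_mul_skewSYT_le ⊥ μ l
  have hfac : (μ.card ! : ℝ) ≤ (maxHook μ : ℝ) ^ μ.card * dim μ := by
    exact_mod_cast factorial_card_le_maxHook_pow_mul_dim μ
  refine div_le_of_le_mul₀ (by positivity) (by positivity) ?_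
  rw [div_mul_eq_mul_div, le_div_iff₀ (by positivity)]
  calc (μ.card ! : ℝ) * skewSYT μ l * μ.card ! = (μ.card ! : ℝ) ^ 2 * skewSYT μ l := by ring
    _ ≤ ((maxHook μ : ℝ) ^ μ.card * dim μ) ^ 2 * skewSYT μ l := by gcongr
    _ = ((maxHook μ : ℝ) ^ 2) ^ μ.card * dim μ * (dim μ * skewSYT μ l) := by ring
    _ ≤ ((maxHook μ : ℝ) ^ 2) ^ μ.card * dim μ * dim l := by gcongr
    _ = ((maxHook μ : ℝ) ^ 2) ^ μ.card * (dim μ * dim l) := by ring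

theorem A_ratio_bound_general (C : ℝ) (k : ℕ)
    (l μ : YoungDiagram) (hμ : μ.card = k)
    (hbal : (maxHook μ : ℝ) ≤ C * Real.sqrt (k : ℝ)) :
    (k.factorial : ℝ) * (skewSYT μ l : ℝ) / ((dim μ : ℝ) * (dim l : ℝ)) ≤
      (C ^ 2 * Real.exp 1) ^ k := by
  subst hμ
  have hhook : (maxHook μ : ℝ) ^ 2 ≤ C ^ 2 * μ.card := by
    calc (maxHook μ : ℝ) ^ 2 ≤ (C * Real.sqrt μ.card) ^ 2 := by gcongr
      _ = C ^ 2 * μ.card := by rw [mul_pow, Real.sq_sqrt (Nat.cast_nonneg _)]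
  have hexp : (μ.card : ℝ) ^ μ.card / μ.card ! ≤ Real.exp 1 ^ μ.card := by
    rw [← Real.exp_nat_mul, mul_one]
    exact Real.pow_div_factorial_le_exp _ (Nat.cast_nonneg _) _
  calc (μ.card ! : ℝ) * skewSYT μ l / (dim μ * dim l)
      ≤ ((maxHook μ : ℝ) ^ 2) ^ μ.card / μ.card ! := factorial_mul_skewSYT_div_le μ l
    _ ≤ (C ^ 2 * μ.card) ^ μ.card / μ.card ! := by gcongr
    _ = (C ^ 2) ^ μ.card * ((μ.card : ℝ) ^ μ.card / μ.card !) := by rw [mul_pow, mul_div_assoc]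
    _ ≤ (C ^ 2) ^ μ.card * Real.exp 1 ^ μ.card := by gcongr
    _ = (C ^ 2 * Real.exp 1) ^ μ.card := (mul_pow _ _ _).symm

/-- bound on the random compression ratio `A_{λ,μ} = k!·d_{λ\μ}/(d_μ·d_λ)`
for `C`-balanced `μ`. -/
theorem A_ratio_bound (C : ℝ) (hC : 0 < C) (n k : ℕ) (hk : 1 ≤ k) (hkn : k ≤ n)
    (l μ : YoungDiagram) (hl : l.card = n) (hμ : μ.card = k) (hsub : μ ≤ l)
    (hbal : (maxHook μ : ℝ) ≤ C * Real.sqrt (k : ℝ)) :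
    (k.factorial : ℝ) * (skewSYT μ l : ℝ) / ((dim μ : ℝ) * (dim l : ℝ)) ≤
      (C ^ 2 * Real.exp 1) ^ k :=
  A_ratio_bound_general C k l μ hμ hbal

end ThickHookPaper
end
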